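/- arXiv:1104.0439 — 3 statements merged into one kernel-verified Lean document; each statement's English description precedes it below -/
import Mathlib

section
/- Let A be a commutative Noetherian ring, let nil(A) denote its nilradical, and let Frac(A) denote its total ring of fractions, i.e. the localization of A at its multiplicative set of nonzerodivisors. Every nonzerodivisor of A maps to a nonzerodivisor of A_red = A/nil(A), so there is a canonical (always injective) A-algebra homomorphism φ from the reduction Frac(A)/nil(Frac(A)) of the total ring of fractions of A to the total ring of fractions Frac(A_red) of A_red. Then φ is an isomorphism if and only if A has no embedded primes, i.e. if and only if every associated prime of A (as a module over itself) is a minimal prime of A. -/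
/-- Every nonzerodivisor of `A` maps to a nonzerodivisor of `A_red = A / nil(A)`. -/
theorem Ideal.Quotient.mk_nilradical_mem_nonZeroDivisors
    {A : Type*} [CommRing A] {s : A} (hs : s ∈ nonZeroDivisors A) :
    Ideal.Quotient.mk (nilradical A) s ∈ nonZeroDivisors (A ⧸ nilradical A) := by
  rw [mem_nonZeroDivisors_iff_right]
  intro z hz
  obtain ⟨a, rfl⟩ := Ideal.Quotient.mk_surjective z
  rw [← _root_.map_mul (Ideal.Quotient.mk (nilradical A)), Ideal.Quotient.eq_zero_iff_mem, mem_nilradical] at hz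
  obtain ⟨n, hn⟩ := hz
  rw [mul_pow] at hn
  have ha : a ^ n = 0 := (mem_nonZeroDivisors_iff_right.mp (pow_mem hs n)) _ hn
  rw [Ideal.Quotient.eq_zero_iff_mem, mem_nilradical]
  exact ⟨n, ha⟩

/-- The canonical ring homomorphism from the total ring of fractions `Frac(A)` of `A` to the
total ring of fractions `Frac(A_red)` of the reduction `A_red = A / nil(A)`, obtained from the
universal property of localization, using that nonzerodivisors of `A` map to nonzerodivisors
(hence to units of `Frac(A_red)`) of `A_red`. -/
noncomputable def fractionRingToFractionRingRed (A : Type*) [CommRing A] :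
    FractionRing A →+* FractionRing (A ⧸ nilradical A) :=
  IsLocalization.lift (M := nonZeroDivisors A) (S := FractionRing A)
    (g := (algebraMap (A ⧸ nilradical A) (FractionRing (A ⧸ nilradical A))).comp
      (Ideal.Quotient.mk (nilradical A)))
    (fun s => IsLocalization.map_units (FractionRing (A ⧸ nilradical A))
      ⟨Ideal.Quotient.mk (nilradical A) s.1,
        Ideal.Quotient.mk_nilradical_mem_nonZeroDivisors s.2⟩)

/-- `A ⧸ nilradical A` is reduced. -/
instance (A : Type*) [CommRing A] : IsReduced (A ⧸ nilradical A) := by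
  rw [← Ideal.isRadical_iff_quotient_reduced]
  exact Ideal.radical_isRadical (⊥ : Ideal A)

/-- The canonical (always injective) homomorphism `φ` from the reduction
`Frac(A)/nil(Frac(A))` of the total ring of fractions of `A` to the total ring of fractions
`Frac(A_red)` of `A_red = A/nil(A)`; it is induced by `fractionRingToFractionRingRed`, which
kills the nilradical because its target is reduced. -/
noncomputable def fracRedToRedFrac (A : Type*) [CommRing A] :
    (FractionRing A ⧸ nilradical (FractionRing A)) →+* FractionRing (A ⧸ nilradical A) :=
  Ideal.Quotient.lift (nilradical (FractionRing A)) (fractionRingToFractionRingRed A)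
    (fun x hx => by
      rw [mem_nilradical] at hx
      exact (hx.map (fractionRingToFractionRingRed A)).eq_zero)


/-! `φ` is always injective, and it is surjective exactly when every `t ∈ A` lying in no minimal
prime is a nonzerodivisor of `A`: such a `t` is a nonzerodivisor of `A_red`, and if `φ (a / s)`
inverts it then `t a = s + n` with `n` nilpotent, a nonzerodivisor of `A`. As the zero divisors of
a Noetherian ring form the union of its finitely many associated primes, prime avoidance turns
this into: every associated prime lies in, hence equals, a minimal prime. -/

open scoped nonZeroDivisors

theorem add_mem_nonZeroDivisors_of_isNilpotent {R : Type*} [CommRing R] {s n : R}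
    (hs : s ∈ R⁰) (hn : IsNilpotent n) : s + n ∈ R⁰ := by
  have hu : IsUnit (algebraMap R (FractionRing R) (s + n)) := by
    rw [map_add]
    exact (hn.map _).isUnit_add_left_of_commute (IsLocalization.map_units _ ⟨s, hs⟩)
      (Commute.all _ _)
  exact mem_nonZeroDivisors_of_injective (IsFractionRing.injective R (FractionRing R))
    hu.mem_nonZeroDivisors

theorem Ideal.Quotient.mk_radical_mem_nonZeroDivisors_iff {R : Type*} [CommRing R]
    (I : Ideal R) {t : R} :
    Ideal.Quotient.mk I.radical t ∈ (R ⧸ I.radical)⁰ ↔ ∀ q ∈ I.minimalPrimes, t ∉ q := by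
  simp only [mem_nonZeroDivisors_iff_right, Ideal.Quotient.mk_surjective.forall, ← map_mul,
    Ideal.Quotient.eq_zero_iff_mem]
  constructor
  · intro ht q hq htq
    obtain ⟨y, hy, hty⟩ := Ideal.exists_mul_mem_of_mem_minimalPrimes
      (I.radical_minimalPrimes ▸ hq) htq
    exact hy (ht y (mul_comm t y ▸ hty))
  · intro ht c hct
    rw [← Ideal.sInf_minimalPrimes, Ideal.mem_sInf] at hct ⊢
    exact fun q hq => (hq.1.1.mem_or_mem (hct hq)).resolve_right (ht q hq)

theorem Ideal.IsPrime.subset_biUnion_minimalPrimes_iff {R : Type*} [CommRing R]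
    (hfin : (minimalPrimes R).Finite) {p : Ideal R} (hp : p.IsPrime) :
    (p : Set R) ⊆ ⋃ q ∈ minimalPrimes R, (q : Set R) ↔ p ∈ minimalPrimes R := by
  refine (Ideal.subset_union_prime_finite hfin (f := id) ⊥ ⊥ fun q hq _ _ => hq.1.1).trans
    ⟨fun ⟨q, hq, hpq⟩ => le_antisymm hpq (hq.2 ⟨hp, bot_le⟩ hpq) ▸ hq, fun h => ⟨p, h, le_rfl⟩⟩

theorem compl_nonZeroDivisors_subset_biUnion_minimalPrimes_iff (A : Type*) [CommRing A]
    [IsNoetherianRing A] :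
    (A⁰ : Set A)ᶜ ⊆ ⋃ q ∈ minimalPrimes A, (q : Set A) ↔
      associatedPrimes A A ⊆ minimalPrimes A := by
  rw [← biUnion_associatedPrimes_eq_compl_nonZeroDivisors, Set.iUnion₂_subset_iff]
  exact forall₂_congr fun p hp =>
    hp.isPrime.subset_biUnion_minimalPrimes_iff (minimalPrimes.finite_of_isNoetherianRing A)

section FracRed

variable {A : Type*} [CommRing A]

theorem fracRedToRedFrac_mk_mk' (a : A) (s : A⁰) :
    fracRedToRedFrac A (Ideal.Quotient.mk _ (IsLocalization.mk' (FractionRing A) a s)) =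
      IsLocalization.mk' (FractionRing (A ⧸ nilradical A)) (Ideal.Quotient.mk _ a)
        ⟨_, Ideal.Quotient.mk_nilradical_mem_nonZeroDivisors s.2⟩ := by
  rw [fracRedToRedFrac, Ideal.Quotient.lift_mk, fractionRingToFractionRingRed,
    IsLocalization.lift_mk'_spec, RingHom.comp_apply, RingHom.comp_apply]
  exact (IsLocalization.mk'_spec' _ _ _).symm

theorem fracRedToRedFrac_injective : Function.Injective (fracRedToRedFrac A) := by
  rw [injective_iff_map_eq_zero]
  intro y hy
  obtain ⟨x, rfl⟩ := Ideal.Quotient.mk_surjective y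
  obtain ⟨a, s, rfl⟩ := IsLocalization.exists_mk'_eq A⁰ x
  rw [fracRedToRedFrac_mk_mk', IsLocalization.mk'_eq_zero_iff] at hy
  obtain ⟨m, hm⟩ := hy
  have ha : IsNilpotent a := by
    rw [← mem_nilradical, ← Ideal.Quotient.eq_zero_iff_mem]
    exact mem_nonZeroDivisors_iff_left.mp m.2 _ hm
  rw [Ideal.Quotient.eq_zero_iff_mem, mem_nilradical, IsLocalization.mk'_eq_mul_mk'_one]
  exact (Commute.all _ _).isNilpotent_mul_right (ha.map _)

theorem fracRedToRedFrac_surjective_iff :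
    Function.Surjective (fracRedToRedFrac A) ↔
      ∀ t : A, Ideal.Quotient.mk (nilradical A) t ∈ (A ⧸ nilradical A)⁰ → t ∈ A⁰ := by
  constructor
  · intro hsurj t ht
    obtain ⟨y, hy⟩ := hsurj (IsLocalization.mk' _ 1 ⟨_, ht⟩)
    obtain ⟨x, rfl⟩ := Ideal.Quotient.mk_surjective y
    obtain ⟨a, s, rfl⟩ := IsLocalization.exists_mk'_eq A⁰ x
    rw [fracRedToRedFrac_mk_mk', IsLocalization.mk'_eq_iff_eq,
      (IsFractionRing.injective _ _).eq_iff, mul_one, ← map_mul, Ideal.Quotient.eq] at hy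
    have hta : t * a ∈ A⁰ := by
      simpa using add_mem_nonZeroDivisors_of_isNilpotent s.2 (mem_nilradical.mp hy)
    exact (mul_mem_nonZeroDivisors.mp hta).1
  · intro h z
    obtain ⟨b, u, rfl⟩ := IsLocalization.exists_mk'_eq (A ⧸ nilradical A)⁰ z
    obtain ⟨a, rfl⟩ := Ideal.Quotient.mk_surjective b
    obtain ⟨t, ht⟩ := Ideal.Quotient.mk_surjective (u : A ⧸ nilradical A)
    refine ⟨Ideal.Quotient.mk _ (IsLocalization.mk' _ a ⟨t, h t (ht ▸ u.2)⟩), ?_⟩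
    rw [fracRedToRedFrac_mk_mk']
    exact congrArg _ (Subtype.ext ht)

end FracRed

/-- **Lemma (Brussel–Tengan).**  Let `A` be a commutative Noetherian ring.  The canonical
homomorphism `φ : Frac(A)/nil(Frac(A)) → Frac(A_red)` is an isomorphism if and only if `A`
has no embedded primes, i.e. every associated prime of `A` (as a module over itself) is a
minimal prime of `A`. -/
theorem fracRed_eq_redFrac_iff_no_embedded_primes
    (A : Type*) [CommRing A] [IsNoetherianRing A] :
    Function.Bijective (fracRedToRedFrac A) ↔
      ∀ p ∈ associatedPrimes A A, p ∈ minimalPrimes A := by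
  have hsurj : Function.Surjective (fracRedToRedFrac A) ↔
      (A⁰ : Set A)ᶜ ⊆ ⋃ q ∈ minimalPrimes A, (q : Set A) := by
    rw [fracRedToRedFrac_surjective_iff]
    refine forall_congr' fun t => ?_
    rw [nilradical, Ideal.Quotient.mk_radical_mem_nonZeroDivisors_iff, ← not_imp_not]
    simp only [Set.mem_compl_iff, Set.mem_iUnion₂, SetLike.mem_coe, exists_prop, not_forall,
      not_not]
    -- `minimalPrimes A` is `Ideal.minimalPrimes ⊥`, and `0 = ⊥` in `Ideal A`
    rfl
  rw [Function.Bijective, and_iff_right fracRedToRedFrac_injective, hsurj,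
    compl_nonZeroDivisors_subset_biUnion_minimalPrimes_iff]
  rfl
end

section
/- Let A be a commutative Noetherian local ring with maximal ideal m. Let f₁, t₁, f₂, t₂ be elements of A such that the ideal generated by {f₁, t₁} equals m and the ideal generated by {f₂, t₂} equals m, while the ideal generated by {f₂, t₁} is not equal to m and the ideal generated by {f₁, t₂} is not equal to m. Then the ideal generated by {f₁ + f₂, t₁} equals m and the ideal generated by {f₁ + f₂, t₂} equals m. -/
set_option maxHeartbeats 1000000

open IsLocalRing

/-- Nakayama step: an ideal contained in the maximal ideal that generates it
modulo `m²` equals it. -/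
private lemma eq_maximalIdeal_of_le_sup_sq
    {A : Type*} [CommRing A] [IsNoetherianRing A] [IsLocalRing A]
    {I : Ideal A} (hle : I ≤ maximalIdeal A)
    (h : maximalIdeal A ≤ I ⊔ maximalIdeal A • maximalIdeal A) :
    I = maximalIdeal A := by
  refine le_antisymm hle ?_
  exact Submodule.le_of_le_smul_of_le_jacobson_bot
    (IsNoetherian.noetherian _)
    (le_of_eq (IsLocalRing.jacobson_eq_maximalIdeal ⊥ bot_ne_top).symm) h

private lemma span_pair_le {A : Type*} [CommRing A] {a b : A} {I : Ideal A}
    (ha : a ∈ I) (hb : b ∈ I) : Ideal.span {a, b} ≤ I :=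
  Ideal.span_le.mpr (Set.insert_subset_iff.mpr ⟨ha, Set.singleton_subset_iff.mpr hb⟩)

private lemma mem_span_sup_sq
    {A : Type*} [CommRing A] [IsNoetherianRing A] [IsLocalRing A]
    {f t f' : A}
    (h : Ideal.span {f, t} = maximalIdeal A)
    (h' : Ideal.span {f', t} ≠ maximalIdeal A)
    (hf' : f' ∈ maximalIdeal A) (hf : f ∈ maximalIdeal A) :
    f' ∈ Ideal.span {t} ⊔ maximalIdeal A • maximalIdeal A := by
  have ht : t ∈ maximalIdeal A := h ▸ Ideal.subset_span (by simp)
  have hmem : f' ∈ Ideal.span {f, t} := h ▸ hf'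
  obtain ⟨x, y, hxy⟩ := Ideal.mem_span_pair.mp hmem
  by_cases hx : IsUnit x
  · exfalso
    apply h'
    refine le_antisymm (span_pair_le hf' ht) ?_
    rw [← h]
    obtain ⟨v, hv⟩ := hx.exists_left_inv
    refine span_pair_le ?_ (Ideal.subset_span (by simp))
    exact Ideal.mem_span_pair.mpr ⟨v, -(v * y), by linear_combination f * hv - v * hxy⟩
  · have hxm : x ∈ maximalIdeal A := by
      rwa [IsLocalRing.mem_maximalIdeal, mem_nonunits_iff]
    have hrw : f' = y * t + x * f := by linear_combination -hxy
    rw [hrw]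
    exact Submodule.add_mem _
      (Ideal.mem_sup_left (Ideal.mem_span_singleton.mpr ⟨y, mul_comm y t⟩))
      (Ideal.mem_sup_right (Submodule.smul_mem_smul hxm hf))

/-- **Key step in the construction of distinguished divisors** (Brussel–Tengan).
Let `A` be a commutative Noetherian local ring with maximal ideal `m`.  If
`(f₁, t₁) = m`, `(f₂, t₂) = m`, while `(f₂, t₁) ≠ m` and `(f₁, t₂) ≠ m`, then
`(f₁ + f₂, t₁) = m` and `(f₁ + f₂, t₂) = m`. -/
theorem span_add_eq_maximalIdeal
    (A : Type*) [CommRing A] [IsNoetherianRing A] [IsLocalRing A]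
    (f₁ t₁ f₂ t₂ : A)
    (h₁ : Ideal.span {f₁, t₁} = IsLocalRing.maximalIdeal A)
    (h₂ : Ideal.span {f₂, t₂} = IsLocalRing.maximalIdeal A)
    (h₂₁ : Ideal.span {f₂, t₁} ≠ IsLocalRing.maximalIdeal A)
    (h₁₂ : Ideal.span {f₁, t₂} ≠ IsLocalRing.maximalIdeal A) :
    Ideal.span {f₁ + f₂, t₁} = IsLocalRing.maximalIdeal A ∧
    Ideal.span {f₁ + f₂, t₂} = IsLocalRing.maximalIdeal A := by
  have hf₁ : f₁ ∈ maximalIdeal A := h₁ ▸ Ideal.subset_span (by simp)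
  have ht₁ : t₁ ∈ maximalIdeal A := h₁ ▸ Ideal.subset_span (by simp)
  have hf₂ : f₂ ∈ maximalIdeal A := h₂ ▸ Ideal.subset_span (by simp)
  have ht₂ : t₂ ∈ maximalIdeal A := h₂ ▸ Ideal.subset_span (by simp)
  have m₂ : f₂ ∈ Ideal.span {t₁} ⊔ maximalIdeal A • maximalIdeal A :=
    mem_span_sup_sq h₁ h₂₁ hf₂ hf₁
  have m₁ : f₁ ∈ Ideal.span {t₂} ⊔ maximalIdeal A • maximalIdeal A :=
    mem_span_sup_sq h₂ h₁₂ hf₁ hf₂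
  constructor
  · apply eq_maximalIdeal_of_le_sup_sq
      (span_pair_le (Submodule.add_mem _ hf₁ hf₂) ht₁)
    conv_lhs => rw [← h₁]
    refine span_pair_le ?_ (Ideal.mem_sup_left (Ideal.subset_span (by simp)))
    have hs : Ideal.span {t₁} ⊔ maximalIdeal A • maximalIdeal A ≤
        Ideal.span {f₁ + f₂, t₁} ⊔ maximalIdeal A • maximalIdeal A :=
      sup_le_sup_right (Ideal.span_mono (by simp)) _
    have := sub_mem
      (Ideal.mem_sup_left (Ideal.subset_span (by simp) :
        f₁ + f₂ ∈ Ideal.span {f₁ + f₂, t₁})) (hs m₂)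
    simpa using this
  · apply eq_maximalIdeal_of_le_sup_sq
      (span_pair_le (Submodule.add_mem _ hf₁ hf₂) ht₂)
    conv_lhs => rw [← h₂]
    refine span_pair_le ?_ (Ideal.mem_sup_left (Ideal.subset_span (by simp)))
    have hs : Ideal.span {t₂} ⊔ maximalIdeal A • maximalIdeal A ≤
        Ideal.span {f₁ + f₂, t₂} ⊔ maximalIdeal A • maximalIdeal A :=
      sup_le_sup_right (Ideal.span_mono (by simp)) _
    have := sub_mem
      (Ideal.mem_sup_left (Ideal.subset_span (by simp) :
        f₁ + f₂ ∈ Ideal.span {f₁ + f₂, t₂})) (hs m₁)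
    simpa using this
end

section
/- Let F be a field, D a finite-dimensional central division algebra over F, and L a field extension of F such that the L-algebra D ⊗_F L is a division ring. Suppose K is a maximal subfield of D that is Galois over F, i.e. K is a commutative F-subalgebra of D which is a field, satisfies (dim_F K)² = dim_F D, and the field extension K/F is Galois. Then the subalgebra K ⊗_F L of D ⊗_F L is a field, it is a maximal subfield of the central division algebra D ⊗_F L over L (that is, (dim_L (K ⊗_F L))² = dim_L (D ⊗_F L)), and K ⊗_F L is a Galois extension of L. Consequently, if D ⊗_F L is a noncrossed product division algebra over L, then D is a noncrossed product division algebra over F. -/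
/-!
`K ⊗[F] L` embeds into `D ⊗[F] L` because `L` is flat over `F`, so it is a commutative domain,
algebraic over `L`, hence a field. Writing `K` as the splitting field of a separable `p` over `F`,
`K ⊗[F] L` is generated over `L` by the image of `K`, so it is the splitting field of `p` over `L`
and thus Galois. Base change preserves dimensions, so the image of `K ⊗[F] L` is a Galois maximal
subfield of `D ⊗[F] L`.
-/

open scoped TensorProduct

attribute [local instance] Algebra.TensorProduct.rightAlgebra

/-- A central simple (e.g. division) algebra `D` over a field `F` is a *noncrossed product*
if no maximal subfield of `D` is Galois over `F`: there is no commutative `F`-subalgebra `K`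
of `D` which is a field, satisfies `(dim_F K)² = dim_F D`, and is a Galois extension of `F`. -/
def IsNoncrossedProduct (F : Type*) [Field F] (D : Type*) [Ring D] [Algebra F D] : Prop :=
  ¬ ∃ (K : Subalgebra F D) (hK : IsField K),
      (Module.finrank F K) ^ 2 = Module.finrank F D ∧
      @IsGalois F _ K hK.toField (by exact inferInstance)

theorem NoZeroDivisors.of_forall_isUnit {R : Type*} [MonoidWithZero R]
    (h : ∀ x : R, x ≠ 0 → IsUnit x) : NoZeroDivisors R where
  eq_zero_or_eq_zero_of_mul_eq_zero {a _} hab :=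
    or_iff_not_imp_left.2 fun ha => (h a ha).mul_right_eq_zero.1 hab

open Polynomial in
theorem IsGalois.of_adjoin_range_eq_top {F E L M : Type*} [Field F] [Field E] [Field L] [Field M]
    [Algebra F E] [Algebra F L] [Algebra L M] [Algebra F M] [IsScalarTower F L M]
    [IsGalois F E] [FiniteDimensional F E] (φ : E →ₐ[F] M)
    (hφ : Algebra.adjoin L (Set.range φ) = ⊤) : IsGalois L M := by
  obtain ⟨p, hsep, hsplit⟩ := IsGalois.is_separable_splitting_field F E
  suffices IsSplittingField L M (p.map (algebraMap F L)) from
    IsGalois.of_separable_splitting_field (p := p.map (algebraMap F L)) hsep.map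
  have hsplitM : (p.map (algebraMap F M)).Splits := by
    rw [← φ.comp_algebraMap, ← Polynomial.map_map]
    exact hsplit.splits.map _
  refine ⟨by rwa [Polynomial.map_map, ← IsScalarTower.algebraMap_eq], ?_⟩
  have hroots : (p.map (algebraMap F L)).rootSet M = p.rootSet M := by
    ext x
    simp [mem_rootSet', map_map, ← IsScalarTower.algebraMap_eq]
  rw [eq_top_iff, ← hφ, Algebra.adjoin_le_iff, ← AlgHom.coe_range,
    ← IsSplittingField.adjoin_rootSet_eq_range E p φ, hroots]
  exact Algebra.adjoin_le (S := (Algebra.adjoin L (p.rootSet M)).restrictScalars F)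
    Algebra.subset_adjoin

namespace Algebra.TensorProduct

variable {F : Type*} [Field F] (L : Type*) [Field L] [Algebra F L]

theorem finrank_right (A : Type*) [Ring A] [Algebra F A] :
    Module.finrank L (A ⊗[F] L) = Module.finrank F A := by
  rw [← (commRight F L A).toLinearEquiv.finrank_eq, Module.finrank_baseChange]

theorem adjoin_range_includeLeft_eq_top (A : Type*) [Semiring A] [Algebra F A] :
    Algebra.adjoin L (Set.range (includeLeft : A →ₐ[F] A ⊗[F] L)) = ⊤ := by
  refine Algebra.eq_top_iff.2 fun x => ?_
  induction x using TensorProduct.induction_on with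
  | zero => exact zero_mem _
  | add x y hx hy => exact add_mem hx hy
  | tmul a l =>
    have : a ⊗ₜ[F] l = l • (includeLeft (R := F) (S := F) a : A ⊗[F] L) := by
      simp [Algebra.smul_def, right_algebraMap_apply]
    rw [this]
    exact Subalgebra.smul_mem _ (Algebra.subset_adjoin (Set.mem_range_self a)) l

theorem isGalois_of_isField {E : Type*} [Field E] [Algebra F E] [IsGalois F E]
    [FiniteDimensional F E] (h : IsField (E ⊗[F] L)) :
    @IsGalois L _ (E ⊗[F] L) h.toField (by exact inferInstance) :=
  let := h.toField
  .of_adjoin_range_eq_top _ (adjoin_range_includeLeft_eq_top L E)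

theorem isField_of_injective {E R : Type*} [Field E] [Algebra F E] [Algebra.IsAlgebraic F E]
    [Semiring R] [NoZeroDivisors R] (f : E ⊗[F] L →+* R) (hf : Function.Injective f) :
    IsField (E ⊗[F] L) :=
  have := hf.noZeroDivisors f (map_zero f) (map_mul f)
  have : IsDomain (E ⊗[F] L) := NoZeroDivisors.to_isDomain _
  isField_of_isAlgebraic F E L (.inl inferInstance)

variable {L}

def mapRight {A B : Type*} [Semiring A] [Algebra F A] [Semiring B] [Algebra F B]
    (f : A →ₐ[F] B) : A ⊗[F] L →ₐ[L] B ⊗[F] L :=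
  { map f (AlgHom.id F L) with commutes' := fun l => by simp [right_algebraMap_apply] }

theorem mapRight_injective {A B : Type*} [Ring A] [Algebra F A] [Ring B] [Algebra F B]
    {f : A →ₐ[F] B} (hf : Function.Injective f) : Function.Injective (mapRight (L := L) f) :=
  TensorProduct.map_injective_of_flat_flat f.toLinearMap LinearMap.id hf Function.injective_id

end Algebra.TensorProduct

open Algebra.TensorProduct in
theorem Subalgebra.exists_isField_tensorProduct_isGalois {F D : Type*} [Field F] [Ring D]
    [Algebra F D] (L : Type*) [Field L] [Algebra F L] [NoZeroDivisors (D ⊗[F] L)]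
    (K : Subalgebra F D) [FiniteDimensional F K] (hK : IsField K)
    (hGal : @IsGalois F _ K hK.toField (by exact inferInstance)) :
    ∃ hKL : IsField (K ⊗[F] L), Function.Injective (mapRight (L := L) K.val) ∧
      @IsGalois L _ (K ⊗[F] L) hKL.toField (by exact inferInstance) := by
  let := hK.toField
  have hinj := mapRight_injective (L := L) (f := K.val) Subtype.val_injective
  have hKL := isField_of_injective L _ hinj
  exact ⟨hKL, hinj, isGalois_of_isField L hKL⟩

theorem not_isNoncrossedProduct_of_injective {F E D : Type*} [Field F] [Field E] [Ring D]
    [Algebra F E] [Algebra F D] [IsGalois F E] (f : E →ₐ[F] D) (hf : Function.Injective f)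
    (hdim : Module.finrank F E ^ 2 = Module.finrank F D) : ¬ IsNoncrossedProduct F D := by
  let e := AlgEquiv.ofInjective f hf
  have hfield : IsField f.range := e.symm.toMulEquiv.isField (Field.toIsField E)
  let := hfield.toField
  exact not_not.2 ⟨f.range, hfield, by rwa [← e.toLinearEquiv.finrank_eq], .of_algEquiv e⟩

open Algebra.TensorProduct in
/-- **Base change of Galois maximal subfields** (Brussel–Tengan).
Let `D` be a finite-dimensional central division algebra over a field `F` and let `L/F` be a
field extension such that `D ⊗[F] L` is a division ring.  If `K` is a maximal subfield of `D`
that is Galois over `F` (a commutative `F`-subalgebra of `D` which is a field, with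
`(dim_F K)² = dim_F D`, and Galois over `F`), then `K ⊗[F] L` is a field, it embeds as a
subalgebra of `D ⊗[F] L`, it is a maximal subfield of `D ⊗[F] L` over `L`
(`(dim_L (K ⊗[F] L))² = dim_L (D ⊗[F] L)`), and `K ⊗[F] L` is Galois over `L`.
Consequently, if `D ⊗[F] L` is a noncrossed product, then so is `D`. -/
theorem galois_maximal_subfield_base_change
    (F : Type*) [Field F] (D : Type*) [DivisionRing D] [Algebra F D]
    [FiniteDimensional F D]
    (L : Type*) [Field L] [Algebra F L]
    (hdiv : ∀ x : D ⊗[F] L, x ≠ 0 → IsUnit x) :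
    (∀ (K : Subalgebra F D) (hK : IsField K),
      (Module.finrank F K) ^ 2 = Module.finrank F D →
      (@IsGalois F _ K hK.toField (by exact inferInstance)) →
      ∃ hKL : IsField (↥K ⊗[F] L),
        Function.Injective (Algebra.TensorProduct.map K.val (AlgHom.id F L)) ∧
        (Module.finrank L (↥K ⊗[F] L)) ^ 2 = Module.finrank L (D ⊗[F] L) ∧
        @IsGalois L _ (↥K ⊗[F] L) hKL.toField (by exact inferInstance)) ∧
    (IsNoncrossedProduct L (D ⊗[F] L) → IsNoncrossedProduct F D) := by
  have := NoZeroDivisors.of_forall_isUnit hdiv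
  have hdimL (K : Subalgebra F D) (hdim : Module.finrank F K ^ 2 = Module.finrank F D) :
      Module.finrank L (K ⊗[F] L) ^ 2 = Module.finrank L (D ⊗[F] L) := by
    rwa [finrank_right, finrank_right]
  refine ⟨fun K hK hdim hGal => ?_, fun hL ⟨K, hK, hdim, hGal⟩ => ?_⟩
  · obtain ⟨hKL, hinj, hGalL⟩ := K.exists_isField_tensorProduct_isGalois L hK hGal
    exact ⟨hKL, hinj, hdimL K hdim, hGalL⟩
  · obtain ⟨hKL, hinj, hGalL⟩ := K.exists_isField_tensorProduct_isGalois L hK hGal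
    let := hKL.toField
    exact absurd hL (not_isNoncrossedProduct_of_injective _ hinj (hdimL K hdim))
end
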